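/- arXiv:1512.03082 — 2 statements merged into one kernel-verified Lean document; each statement's English description precedes it below -/
import Mathlib

section
/- Fix M ≥ 2, real numbers Δt, Δx, a, ρ_l > 0 and densities ρ⁰_1, …, ρ⁰_M > 0. Let A = (1/ρ_l)·diag(ρ⁰_1, …, ρ⁰_M) and let B be the M×M matrix with B_{k,k} = aΔx/2 for all k, B_{k+1,k} = aΔx/2 for 1 ≤ k ≤ M−1, B_{1,M} = aΔx/2, and all other entries zero. Then det(Δt·A + B) ≠ 0; i.e., the interface block Δt·A + B of the coupling Jacobian is invertible (for every Δt > 0). -/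
/-- Invertibility of the interface block `Δt·A + B` of the coupling Jacobian for every
`Δt > 0`, where `A = (1/ρ_l)·diag(ρ⁰_1, …, ρ⁰_M)` with positive densities `ρ⁰_k` and
`B` is the cyclic lower bidiagonal matrix with all entries `aΔx/2` on the diagonal and
the cyclic subdiagonal: `det(Δt·A + B) ≠ 0`. -/
theorem det_interface_block_ne_zero (M : ℕ) (hM : 2 ≤ M) (Δt Δx a ρl : ℝ)
    (hΔt : 0 < Δt) (hΔx : 0 < Δx) (ha : 0 < a) (hρl : 0 < ρl)
    (ρ0 : Fin M → ℝ) (hρ0 : ∀ k, 0 < ρ0 k) :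
    Matrix.det
      (Δt • ((1 / ρl) • Matrix.diagonal ρ0) +
        Matrix.of fun i j : Fin M =>
          if i = j ∨ (i : ℕ) = ((j : ℕ) + 1) % M then a * Δx / 2 else (0 : ℝ)) ≠ 0 := by
  set c := a * Δx / 2 with hc
  have hcpos : 0 < c := by positivity
  set N := (Δt • ((1 / ρl) • Matrix.diagonal ρ0) +
        Matrix.of fun i j : Fin M =>
          if i = j ∨ (i : ℕ) = ((j : ℕ) + 1) % M then c else (0 : ℝ)) with hN
  apply det_ne_zero_of_sum_row_lt_diag
  intro k
  have hMpos : 0 < M := by omega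
  -- off-diagonal entries
  have hoff : ∀ j : Fin M, j ≠ k →
      N k j = if (k : ℕ) = ((j : ℕ) + 1) % M then c else 0 := by
    intro j hjk
    have : k ≠ j := fun h => hjk h.symm
    simp [hN, Matrix.add_apply, Matrix.diagonal_apply, this, Matrix.of_apply]
  -- the unique nonzero off-diagonal column
  have hj0lt : (k.val + (M - 1)) % M < M := Nat.mod_lt _ hMpos
  set j0 : Fin M := ⟨(k.val + (M - 1)) % M, hj0lt⟩ with hj0
  have hkey : (k : ℕ) = ((j0 : ℕ) + 1) % M := by
    have h1 : ((k.val + (M - 1)) % M + 1) % M = (k.val + (M - 1) + 1) % M :=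
      Nat.mod_add_mod _ _ _
    have h2 : k.val + (M - 1) + 1 = k.val + M := by omega
    have h3 : (k.val + M) % M = k.val := by
      rw [Nat.add_mod_right]; exact Nat.mod_eq_of_lt k.isLt
    simp only [hj0]
    rw [h1, h2, h3]
  have hchar : ∀ j : Fin M,
      ((j : ℕ) + 1) % M = 0 ∧ (j : ℕ) + 1 = M ∨ ((j : ℕ) + 1) % M = (j : ℕ) + 1 := by
    intro j
    by_cases h : (j : ℕ) + 1 = M
    · exact Or.inl ⟨by rw [h, Nat.mod_self], h⟩
    · exact Or.inr (Nat.mod_eq_of_lt (by have := j.isLt; omega))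
  have hj0k : j0 ≠ k := by
    intro h
    have hk : (k : ℕ) = ((k : ℕ) + 1) % M := by rw [← h] at hkey ⊢; exact hkey
    have := hchar k
    have hklt := k.isLt
    omega
  have hsum : ∑ j ∈ Finset.univ.erase k, ‖N k j‖ = c := by
    rw [Finset.sum_eq_single_of_mem j0 (Finset.mem_erase.2 ⟨hj0k, Finset.mem_univ _⟩)]
    · rw [hoff j0 hj0k, if_pos hkey]
      exact Real.norm_of_nonneg hcpos.le
    · intro j hj hjj0
      have hjk : j ≠ k := (Finset.mem_erase.1 hj).1
      rw [hoff j hjk]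
      have hne : (k : ℕ) ≠ ((j : ℕ) + 1) % M := by
        intro heq
        apply hjj0
        have e1 := hchar j
        have e2 := hchar j0
        have hjlt := j.isLt
        have hj0lt' := j0.isLt
        refine Fin.ext ?_
        omega
      rw [if_neg hne]; simp
  rw [hsum]
  have hdiag : N k k = Δt * ((1 / ρl) * ρ0 k) + c := by
    simp [hN, Matrix.add_apply, Matrix.diagonal_apply, Matrix.of_apply, smul_eq_mul]
  rw [hdiag]
  have hpos : 0 < Δt * ((1 / ρl) * ρ0 k) := by
    have := hρ0 k; positivity
  rw [Real.norm_of_nonneg (by linarith)]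
  linarith
end

section
/- (Core of Theorem 3.1.) Fix N > M ≥ 2, real numbers Δt, Δx, a, ρ_l > 0 and densities ρ⁰_1, …, ρ⁰_M > 0. Let A = (1/ρ_l)·diag(ρ⁰_1, …, ρ⁰_M), let B be the M×M matrix with B_{k,k} = B_{k+1,k} = B_{1,M} = aΔx/2 (indices 1 ≤ k ≤ M, cyclic subdiagonal) and all other entries zero, let M₁ be any (N−M)×M real matrix and let M₂ be an invertible (N−M)×(N−M) real matrix. Then the N×N block lower triangular matrix J with blocks J = [[Δt·A + B, 0], [Δt·M₁·A, Δt·M₂]] satisfies det J = Δt^{N−M}·det(M₂)·det(Δt·A + B) ≠ 0. In particular the Jacobian of the discrete coupling operator at σ = 0 is invertible. -/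
/-- Core of Theorem 3.1: the Jacobian of the discrete coupling operator at `σ = 0`,
in block lower triangular form `J = [[Δt·A + B, 0], [Δt·M₁·A, Δt·M₂]]` with
`A = (1/ρ_l)·diag(ρ⁰_1, …, ρ⁰_M)` (positive densities), `B` the cyclic lower bidiagonal
matrix with entries `aΔx/2`, `M₁` arbitrary, and `M₂` invertible, satisfies
`det J = Δt^{N−M}·det(M₂)·det(Δt·A + B) ≠ 0`; in particular `J` is invertible. -/
theorem coupling_jacobian_det (N M : ℕ) (hM : 2 ≤ M) (hMN : M < N)
    (Δt Δx a ρl : ℝ) (hΔt : 0 < Δt) (hΔx : 0 < Δx) (ha : 0 < a) (hρl : 0 < ρl)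
    (ρ0 : Fin M → ℝ) (hρ0 : ∀ k, 0 < ρ0 k)
    (M₁ : Matrix (Fin (N - M)) (Fin M) ℝ)
    (M₂ : Matrix (Fin (N - M)) (Fin (N - M)) ℝ) (hM₂ : M₂.det ≠ 0) :
    letI A : Matrix (Fin M) (Fin M) ℝ := (1 / ρl) • Matrix.diagonal ρ0
    letI B : Matrix (Fin M) (Fin M) ℝ :=
      Matrix.of fun i j : Fin M =>
        if i = j ∨ (i : ℕ) = ((j : ℕ) + 1) % M then a * Δx / 2 else (0 : ℝ)
    letI J := Matrix.fromBlocks (Δt • A + B) 0 (Δt • (M₁ * A)) (Δt • M₂)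
    J.det = Δt ^ (N - M) * M₂.det * (Δt • A + B).det ∧ J.det ≠ 0 := by
  set A : Matrix (Fin M) (Fin M) ℝ := (1 / ρl) • Matrix.diagonal ρ0 with hA
  set B : Matrix (Fin M) (Fin M) ℝ :=
      Matrix.of fun i j : Fin M =>
        if i = j ∨ (i : ℕ) = ((j : ℕ) + 1) % M then a * Δx / 2 else (0 : ℝ) with hB
  set J := Matrix.fromBlocks (Δt • A + B) 0 (Δt • (M₁ * A)) (Δt • M₂) with hJ
  haveI : NeZero M := ⟨by omega⟩
  have hMpos : (0:ℕ) < M := by omega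
  have hone : ((1 : Fin M) : ℕ) = 1 := by
    rw [Fin.val_one']
    exact Nat.mod_eq_of_lt hM
  have hc : (0:ℝ) < a * Δx / 2 := by positivity
  -- determinant formula
  have hdet : J.det = Δt ^ (N - M) * M₂.det * (Δt • A + B).det := by
    rw [Matrix.det_fromBlocks_zero₁₂, Matrix.det_smul, Fintype.card_fin]
    ring
  -- nonvanishing of the top-left block via diagonal dominance
  have hTL : (Δt • A + B).det ≠ 0 := by
    apply det_ne_zero_of_sum_row_lt_diag
    intro k
    have hdiagB : B k k = a * Δx / 2 := by
      simp [B, Matrix.of_apply]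
    have hdiag : (Δt • A + B) k k = Δt * ((1/ρl) * ρ0 k) + a * Δx / 2 := by
      simp [A, hdiagB, Matrix.add_apply, Matrix.smul_apply, Matrix.diagonal_apply_eq,
        smul_eq_mul]
    have hsum : ∑ j ∈ Finset.univ.erase k, ‖(Δt • A + B) k j‖ = a * Δx / 2 := by
      rw [Finset.sum_eq_single_of_mem (k - 1)]
      · have hne : k - 1 ≠ k := by
          intro h
          have h1 : (1 : Fin M) = 0 := sub_eq_self.mp h
          have h2 := congrArg Fin.val h1
          rw [hone] at h2
          simp at h2
        have hcond : (k : ℕ) = (((k - 1 : Fin M) : ℕ) + 1) % M := by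
          have : ((k - 1) + 1 : Fin M) = k := sub_add_cancel k 1
          calc (k : ℕ) = (((k-1) + 1 : Fin M) : ℕ) := by rw [this]
            _ = (((k - 1 : Fin M) : ℕ) + (1:Fin M) : ℕ) % M := Fin.val_add _ _
            _ = (((k - 1 : Fin M) : ℕ) + 1) % M := by rw [hone]
        have hentry : (Δt • A + B) k (k - 1) = a * Δx / 2 := by
          have : Matrix.diagonal ρ0 k (k - 1) = 0 := Matrix.diagonal_apply_ne _ hne.symm
          simp [A, B, Matrix.add_apply, Matrix.smul_apply, this, hne.symm, hcond,
            Matrix.of_apply]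
        rw [hentry, Real.norm_eq_abs, abs_of_pos hc]
      · refine Finset.mem_erase.mpr ⟨?_, Finset.mem_univ _⟩
        intro h
        have h1 : (1 : Fin M) = 0 := sub_eq_self.mp h
        have := congrArg Fin.val h1
        rw [hone] at this
        simp at this
      · intro j hj hjne
        have hjk : j ≠ k := (Finset.mem_erase.mp hj).1
        have : (Δt • A + B) k j = 0 := by
          have hd : Matrix.diagonal ρ0 k j = 0 := Matrix.diagonal_apply_ne _ (Ne.symm hjk)
          have hcond : ¬ ((k:ℕ) = ((j:ℕ) + 1) % M) := by
            intro h
            apply hjne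
            have : (j + 1 : Fin M) = k := by
              apply Fin.ext
              rw [Fin.val_add, hone, ← h]
            rw [← this]
            simp
          simp [A, B, Matrix.add_apply, Matrix.smul_apply, hd, Ne.symm hjk, hcond,
            Matrix.of_apply]
        rw [this]
        simp
    rw [hsum, hdiag]
    have hk := hρ0 k
    have : 0 < Δt * ((1/ρl) * ρ0 k) := by positivity
    rw [Real.norm_eq_abs, abs_of_pos (by linarith)]
    linarith
  refine ⟨hdet, ?_⟩
  rw [hdet]
  exact mul_ne_zero (mul_ne_zero (pow_ne_zero _ (ne_of_gt hΔt)) hM₂) hTL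
end
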